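/- arXiv:math/9807047 — 2 statements merged into one kernel-verified Lean document; each statement's English description precedes it below -/
import Mathlib

section
/- Let R₀ ⊆ R₁ ⊆ R = ⋃ₖ Rₖ be a filtered ring with R₀ a subring, RᵢRⱼ ⊆ R_{i+j}, and Gr(R) commutative. Suppose the canonical map Sym_{R₀}(R₁/R₀) → Gr(R) is an isomorphism. Then the canonical surjection φ from T_{R₀}(R₁)/J to R is an isomorphism, where T_{R₀}(R₁) is the tensor algebra of the (R₀,R₀)-bimodule R₁ and J is the two-sided ideal generated by the elements a − i(a) for a ∈ R₀ and i(x)⊗i(y) − i(y)⊗i(x) − i([x,y]) for x,y ∈ R₁. -/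
/-! Send a letter `x ∈ R₁` to `(x, g x) ∈ R × A`. The subring `S` these pairs generate is the
graph of the required homomorphism once its projection to `R` is onto and its fibre over `0` is
trivial. Surjectivity of `Sym → Gr` gives the first by induction on the filtration degree. For
the second, filter `S` by word length: if `(0, y)` is a combination of words of length at most
`n + 1`, its top-degree part evaluates into `Rₙ`, so by injectivity of `Sym → Gr` it is a
trivial relation. Each trivial relation is, in `R × A`, a combination of words of length at
most `n`: swapping two letters costs the word with their commutator in place, which `g`
respects, and a letter from `R₀` is absorbed into a neighbour. Descending to length one,
where the pairs are `(x, g x)`, forces `y = 0`. -/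

noncomputable section

/-- `word F k l`: the list `l` is a `k`-letter word with letters in `R₁ = F 1`. -/
def word {R : Type*} [Ring R] (F : ℤ → AddSubgroup R) (k : ℕ) (l : List R) : Prop :=
  l.length = k ∧ ∀ x ∈ l, x ∈ F 1

/-- Formal `ℤ`-linear combinations of words in elements of `R`; words of length `k` with
letters in `R₁` model the degree-`k` part of the tensor algebra `T_{R₀}(R₁)`. -/
abbrev FormalSum (R : Type*) := List R →₀ ℤ

/-- Evaluation of a formal sum of words in `R`: each word goes to the product of its letters. -/
def evalFS (R : Type*) [Ring R] : FormalSum R →+ R :=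
  Finsupp.liftAddHom fun l => (zmultiplesHom R) l.prod

/-- The degree-`k` part: formal `ℤ`-combinations of `k`-letter words with letters in `F 1`. -/
def degreePart {R : Type*} [Ring R] (F : ℤ → AddSubgroup R) (k : ℕ) :
    AddSubgroup (FormalSum R) :=
  AddSubgroup.closure {t | ∃ l, word F k l ∧ t = Finsupp.single l 1}

/-- The "trivial relations" in degree `k`: the kernel of the canonical map from the degree-`k`
words onto `Sym^k_{R₀}(R₁/R₀)`.  It is generated by: words with a letter in `R₀ = F 0`
(these die in `R₁/R₀`), differences of permuted words (symmetry), additivity in one slot,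
and moving a coefficient `a ∈ R₀` from one slot to another (`R₀`-multilinearity). -/
def trivialRelations {R : Type*} [Ring R] (F : ℤ → AddSubgroup R) (k : ℕ) :
    AddSubgroup (FormalSum R) :=
  AddSubgroup.closure
    {t | (∃ l, word F k l ∧ (∃ x ∈ l, x ∈ F 0) ∧ t = Finsupp.single l 1) ∨
      (∃ l l', word F k l ∧ List.Perm l l' ∧
        t = Finsupp.single l 1 - Finsupp.single l' 1) ∨
      (∃ (l₁ l₂ : List R) (x y : R), x ∈ F 1 ∧ y ∈ F 1 ∧
        word F k (l₁ ++ [x + y] ++ l₂) ∧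
        t = Finsupp.single (l₁ ++ [x + y] ++ l₂) 1 - Finsupp.single (l₁ ++ [x] ++ l₂) 1 -
          Finsupp.single (l₁ ++ [y] ++ l₂) 1) ∨
      (∃ (l₁ l₂ l₃ : List R) (a x y : R), a ∈ F 0 ∧ x ∈ F 1 ∧ y ∈ F 1 ∧
        word F k (l₁ ++ [a * x] ++ l₂ ++ [y] ++ l₃) ∧
        t = Finsupp.single (l₁ ++ [a * x] ++ l₂ ++ [y] ++ l₃) 1 -
          Finsupp.single (l₁ ++ [x] ++ l₂ ++ [a * y] ++ l₃) 1)}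

namespace Subring

variable {R A : Type*} [Ring R] [Ring A] (S : Subring (R × A))

theorem snd_eq_of_mem (hS : ∀ y : A, ((0 : R), y) ∈ S → y = 0) {x : R} {y y' : A}
    (hy : (x, y) ∈ S) (hy' : (x, y') ∈ S) : y = y' :=
  sub_eq_zero.1 (hS _ (by simpa using sub_mem hy hy'))

def graphHom (hS : ∀ x : R, ∃ y : A, (x, y) ∈ S)
    (hS0 : ∀ y : A, ((0 : R), y) ∈ S → y = 0) : R →+* A where
  toFun x := (hS x).choose
  map_one' := S.snd_eq_of_mem hS0 (hS 1).choose_spec S.one_mem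
  map_mul' x y :=
    S.snd_eq_of_mem hS0 (hS _).choose_spec (S.mul_mem (hS x).choose_spec (hS y).choose_spec)
  map_zero' := S.snd_eq_of_mem hS0 (hS 0).choose_spec S.zero_mem
  map_add' x y :=
    S.snd_eq_of_mem hS0 (hS _).choose_spec (S.add_mem (hS x).choose_spec (hS y).choose_spec)

variable (hS : ∀ x : R, ∃ y : A, (x, y) ∈ S) (hS0 : ∀ y : A, ((0 : R), y) ∈ S → y = 0)

theorem graphHom_eq_of_mem {x : R} {y : A} (h : (x, y) ∈ S) : S.graphHom hS hS0 x = y :=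
  S.snd_eq_of_mem hS0 (hS x).choose_spec h

theorem eq_graphHom_of_le_range {Ψ : R →+* A} (h : S ≤ ((RingHom.id R).prod Ψ).range) :
    Ψ = S.graphHom hS hS0 := by
  ext x
  obtain ⟨z, hz⟩ := h (hS x).choose_spec
  obtain ⟨rfl, hz⟩ := Prod.mk.inj hz
  exact hz

end Subring

section PBW

variable {R A : Type*} [Ring R] [Ring A] {F : ℤ → AddSubgroup R} {g : R → A}

theorem list_prod_mem_of_forall_mem_one (hone : (1 : R) ∈ F 0)
    (hmul : ∀ (i j : ℤ) (x y : R), x ∈ F i → y ∈ F j → x * y ∈ F (i + j)) :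
    ∀ {l : List R}, (∀ x ∈ l, x ∈ F 1) → l.prod ∈ F l.length
  | [], _ => by simpa using hone
  | x :: l, hl => by
    simpa [add_comm] using hmul 1 l.length x l.prod (hl x List.mem_cons_self)
      (list_prod_mem_of_forall_mem_one hone hmul fun y hy => hl y (List.mem_cons_of_mem x hy))

variable (g) in
def graphWord (l : List R) : R × A :=
  (l.map fun x => (x, g x)).prod

@[simp]
theorem graphWord_nil : graphWord g ([] : List R) = 1 := rfl

@[simp]
theorem graphWord_cons (x : R) (l : List R) :
    graphWord g (x :: l) = (x, g x) * graphWord g l := by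
  simp [graphWord]

@[simp]
theorem graphWord_append (l l' : List R) :
    graphWord g (l ++ l') = graphWord g l * graphWord g l' := by
  simp [graphWord]

@[simp]
theorem fst_graphWord (l : List R) : (graphWord g l).1 = l.prod := by
  induction l with
  | nil => rfl
  | cons x l ih => simp [ih]

variable (F g) in
def wordFiltration (n : ℤ) : AddSubgroup (R × A) :=
  AddSubgroup.closure
    {p | ∃ l : List R, (l.length : ℤ) ≤ n ∧ (∀ x ∈ l, x ∈ F 1) ∧ graphWord g l = p}

theorem graphWord_mem_wordFiltration {l : List R} {n : ℤ} (hl : ∀ x ∈ l, x ∈ F 1)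
    (hn : (l.length : ℤ) ≤ n) : graphWord g l ∈ wordFiltration F g n :=
  AddSubgroup.subset_closure ⟨l, hn, hl, rfl⟩

theorem mk_mem_wordFiltration_one {x : R} (hx : x ∈ F 1) : (x, g x) ∈ wordFiltration F g 1 := by
  simpa using graphWord_mem_wordFiltration (g := g) (l := [x]) (by simpa using hx) (by simp)

theorem wordFiltration_mono : Monotone (wordFiltration F g) := fun _ _ hmn =>
  AddSubgroup.closure_mono fun _ ⟨l, hl, hF, hp⟩ => ⟨l, hl.trans hmn, hF, hp⟩

theorem mul_mem_wordFiltration {m n : ℤ} {p q : R × A} (hp : p ∈ wordFiltration F g m)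
    (hq : q ∈ wordFiltration F g n) : p * q ∈ wordFiltration F g (m + n) := by
  induction hp using AddSubgroup.closure_induction with
  | mem p hp =>
    induction hq using AddSubgroup.closure_induction with
    | mem q hq =>
      obtain ⟨l, hlm, hl, rfl⟩ := hp
      obtain ⟨l', hln, hl', rfl⟩ := hq
      rw [← graphWord_append]
      refine graphWord_mem_wordFiltration (by simpa [or_imp, forall_and] using ⟨hl, hl'⟩) ?_
      push_cast [List.length_append]
      omega
    | zero => simp
    | add q q' _ _ h h' => rw [mul_add]; exact add_mem h h'
    | neg q _ h => rw [mul_neg]; exact neg_mem h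
  | zero => simp
  | add p p' _ _ h h' => rw [add_mul]; exact add_mem h h'
  | neg p _ h => rw [neg_mul]; exact neg_mem h

theorem fst_mem_of_mem_wordFiltration (hmono : Monotone F) (hone : (1 : R) ∈ F 0)
    (hmul : ∀ (i j : ℤ) (x y : R), x ∈ F i → y ∈ F j → x * y ∈ F (i + j))
    {n : ℤ} {p : R × A} (hp : p ∈ wordFiltration F g n) : p.1 ∈ F n := by
  suffices wordFiltration F g n ≤ (F n).comap (AddMonoidHom.fst R A) from this hp
  refine (AddSubgroup.closure_le _).2 ?_
  rintro _ ⟨l, hln, hl, rfl⟩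
  simpa using hmono hln (list_prod_mem_of_forall_mem_one hone hmul hl)

theorem mem_wordFiltration_one (hmono : Monotone F) (hone : (1 : R) ∈ F 0)
    (hadd : ∀ x ∈ F 1, ∀ y ∈ F 1, g (x + y) = g x + g y) (hg1 : g 1 = 1)
    {p : R × A} (hp : p ∈ wordFiltration F g 1) : p.1 ∈ F 1 ∧ p.2 = g p.1 := by
  let gF : F 1 →+ A := AddMonoidHom.mk' (fun u => g u) fun u v => hadd u u.2 v v.2
  suffices wordFiltration F g 1 ≤ ((F 1).subtype.prod gF).range by
    obtain ⟨u, rfl⟩ := this hp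
    exact ⟨u.2, rfl⟩
  refine (AddSubgroup.closure_le _).2 ?_
  rintro _ ⟨l, hlen, hl, rfl⟩
  match l, hlen, hl with
  | [], _, _ => exact ⟨⟨1, hmono zero_le_one hone⟩, by simp [gF, hg1]⟩
  | [x], _, hl => exact ⟨⟨x, hl x (by simp)⟩, by simp [gF]⟩
  | _ :: _ :: _, hlen, _ => simp at hlen; omega

theorem graphWord_sub_mem_of_perm
    (hgr : ∀ (i j : ℤ) (x y : R), x ∈ F i → y ∈ F j → x * y - y * x ∈ F (i + j - 1))
    (hcomm : ∀ x ∈ F 1, ∀ y ∈ F 1, g x * g y - g y * g x = g (x * y - y * x))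
    {l l' : List R} (h : l.Perm l') (hl : ∀ x ∈ l, x ∈ F 1) :
    graphWord g l - graphWord g l' ∈ wordFiltration F g (l.length - 1) := by
  induction h with
  | nil => simp
  | cons x h ih =>
    rw [graphWord_cons, graphWord_cons, ← mul_sub]
    have := mul_mem_wordFiltration (mk_mem_wordFiltration_one (hl x List.mem_cons_self))
      (ih fun y hy => hl y (List.mem_cons_of_mem x hy))
    simpa using this
  | swap x y l =>
    have hx : x ∈ F 1 := hl x (by simp)
    have hy : y ∈ F 1 := hl y (by simp)
    have hyx : y * x - x * y ∈ F 1 := by simpa using hgr 1 1 y x hy hx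
    have hswap : graphWord g (y :: x :: l) - graphWord g (x :: y :: l)
        = graphWord g ((y * x - x * y) :: l) := by
      simp only [graphWord_cons, ← hcomm y hy x hx, ← mul_assoc, ← sub_mul]
      rfl
    rw [hswap]
    exact graphWord_mem_wordFiltration
      (by simpa [hyx] using fun z hz => hl z (by simp [hz])) (by simp)
  | trans h₁ h₂ ih₁ ih₂ =>
    have h₂' := ih₂ fun x hx => hl x (h₁.symm.subset hx)
    rw [← h₁.length_eq] at h₂'
    simpa using add_mem (ih₁ hl) h₂'

theorem graphWord_mem_of_letter_mem_F_zero
    (hmul : ∀ (i j : ℤ) (x y : R), x ∈ F i → y ∈ F j → x * y ∈ F (i + j))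
    (hgr : ∀ (i j : ℤ) (x y : R), x ∈ F i → y ∈ F j → x * y - y * x ∈ F (i + j - 1))
    (hmul0 : ∀ a ∈ F 0, ∀ x ∈ F 1, g (a * x) = g a * g x ∧ g (x * a) = g x * g a)
    (hcomm : ∀ x ∈ F 1, ∀ y ∈ F 1, g x * g y - g y * g x = g (x * y - y * x))
    {l : List R} (hl : ∀ x ∈ l, x ∈ F 1) {b : R} (hb : b ∈ l) (hb0 : b ∈ F 0)
    (hlen : 2 ≤ l.length) : graphWord g l ∈ wordFiltration F g (l.length - 1) := by
  classical
  obtain ⟨x, m, hxm⟩ : ∃ x m, l.erase b = x :: m := by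
    cases h : l.erase b with
    | nil => have := List.length_erase_of_mem hb; simp [h] at this; omega
    | cons x m => exact ⟨x, m, rfl⟩
  have hperm : l.Perm (b :: x :: m) := hxm ▸ List.perm_cons_erase hb
  have hx : x ∈ F 1 := hl x (hperm.symm.subset (by simp))
  have hbx : b * x ∈ F 1 := by simpa using hmul 0 1 b x hb0 hx
  have habsorb : graphWord g (b :: x :: m) = graphWord g ((b * x) :: m) := by
    simp only [graphWord_cons, ← mul_assoc, Prod.mk_mul_mk, (hmul0 b hb0 x hx).1]
  rw [← sub_add_cancel (graphWord g l) (graphWord g (b :: x :: m))]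
  nth_rw 2 [habsorb]
  refine add_mem (graphWord_sub_mem_of_perm hgr hcomm hperm hl)
    (graphWord_mem_wordFiltration ?_ (by simp [hperm.length_eq]))
  simpa [hbx] using fun z hz => hl z (hperm.symm.subset (by simp [hz]))

theorem graphWord_sub_graphWord_mem_of_move_coeff (hmono : Monotone F)
    (hmul : ∀ (i j : ℤ) (x y : R), x ∈ F i → y ∈ F j → x * y ∈ F (i + j))
    (hgr : ∀ (i j : ℤ) (x y : R), x ∈ F i → y ∈ F j → x * y - y * x ∈ F (i + j - 1))
    (hmul0 : ∀ a ∈ F 0, ∀ x ∈ F 1, g (a * x) = g a * g x ∧ g (x * a) = g x * g a)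
    (hcomm : ∀ x ∈ F 1, ∀ y ∈ F 1, g x * g y - g y * g x = g (x * y - y * x))
    {a x y : R} (ha : a ∈ F 0) (hx : x ∈ F 1) (hy : y ∈ F 1) {l₁ l₂ l₃ : List R}
    (hl : ∀ z ∈ l₁ ++ [a * x] ++ l₂ ++ [y] ++ l₃, z ∈ F 1) :
    graphWord g (l₁ ++ [a * x] ++ l₂ ++ [y] ++ l₃) -
        graphWord g (l₁ ++ [x] ++ l₂ ++ [a * y] ++ l₃)
      ∈ wordFiltration F g ((l₁ ++ l₂ ++ l₃).length + 1) := by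
  set L := l₁ ++ l₂ ++ l₃
  have hmove : ∀ u v : R, (l₁ ++ [u] ++ l₂ ++ [v] ++ l₃).Perm (u :: v :: L) := fun u v => by
    simp only [L, List.append_assoc, List.singleton_append]
    exact List.perm_middle.trans (.cons _ (by simpa using List.perm_middle (l₁ := l₁ ++ l₂)))
  have hL : ∀ z ∈ L, z ∈ F 1 := fun z hz => hl z ((hmove _ _).symm.subset (by simp [hz]))
  have hay : a * y ∈ F 1 := by simpa using hmul 0 1 a y ha hy
  have hc : a * x - x * a ∈ F 0 := by simpa using hgr 0 1 a x ha hx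
  have hcy : (a * x - x * a) * y ∈ F 1 := by simpa using hmul 0 1 _ y hc hy
  have hl' : ∀ z ∈ l₁ ++ [x] ++ l₂ ++ [a * y] ++ l₃, z ∈ F 1 := fun z hz => by
    rcases List.mem_cons.1 ((hmove x (a * y)).subset hz) with rfl | hz
    · exact hx
    rcases List.mem_cons.1 hz with rfl | hz
    exacts [hay, hL z hz]
  -- after sorting, the two words differ by the commutator `[a, x] ∈ R₀`, absorbed into `y`
  have hsorted : graphWord g ((a * x) :: y :: L) - graphWord g (x :: (a * y) :: L)
      = graphWord g (((a * x - x * a) * y) :: L) := by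
    have hg : g ((a * x - x * a) * y) = (g a * g x - g x * g a) * g y := by
      rw [(hmul0 _ hc y hy).1, hcomm a (hmono zero_le_one ha) x hx]
    simp only [graphWord_cons, Prod.mk_mul_mk, (hmul0 a ha x hx).1, (hmul0 a ha y hy).1, hg,
      ← mul_assoc, ← sub_mul, Prod.mk_sub_mk]
  have hlen : ∀ u v : R, ((l₁ ++ [u] ++ l₂ ++ [v] ++ l₃).length : ℤ) - 1 = L.length + 1 :=
    fun u v => by simp [L]; omega
  have h₁ := graphWord_sub_mem_of_perm hgr hcomm (hmove _ _) hl
  have h₂ := graphWord_sub_mem_of_perm hgr hcomm (hmove _ _) hl'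
  rw [hlen] at h₁ h₂
  have h₃ : graphWord g (((a * x - x * a) * y) :: L) ∈ wordFiltration F g (L.length + 1) :=
    graphWord_mem_wordFiltration (by simpa [hcy] using hL) (by simp)
  rw [← hsorted] at h₃
  convert sub_mem (add_mem h₁ h₃) h₂ using 1
  abel

variable (g) in
def graphEval : FormalSum R →+ R × A :=
  Finsupp.liftAddHom fun l => zmultiplesHom (R × A) (graphWord g l)

@[simp]
theorem graphEval_single (l : List R) (c : ℤ) :
    graphEval g (Finsupp.single l c) = c • graphWord g l := by
  simp [graphEval]

@[simp]
theorem fst_graphEval (t : FormalSum R) : (graphEval g t).1 = evalFS R t := by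
  suffices (AddMonoidHom.fst R A).comp (graphEval g) = evalFS R from DFunLike.congr_fun this t
  exact Finsupp.addHom_ext fun l c => by simp [evalFS]

theorem map_degreePart_le (k : ℕ) :
    (degreePart F k).map (graphEval g) ≤ wordFiltration F g k := by
  rw [degreePart, AddMonoidHom.map_closure, AddSubgroup.closure_le]
  rintro _ ⟨_, ⟨l, ⟨hlen, hl⟩, rfl⟩, rfl⟩
  simpa using graphWord_mem_wordFiltration (g := g) hl (by exact_mod_cast hlen.le)

theorem wordFiltration_succ_le (k : ℕ) :
    wordFiltration F g (k + 1 : ℕ) ≤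
      (degreePart F (k + 1)).map (graphEval g) ⊔ wordFiltration F g k := by
  refine (AddSubgroup.closure_le _).2 ?_
  rintro _ ⟨l, hlen, hl, rfl⟩
  rcases (Int.le_iff_lt_or_eq.1 hlen) with hlt | heq
  · exact AddSubgroup.mem_sup_right (graphWord_mem_wordFiltration hl (by omega))
  · refine AddSubgroup.mem_sup_left ⟨Finsupp.single l 1, ?_, by simp⟩
    exact AddSubgroup.subset_closure ⟨l, ⟨by omega, hl⟩, rfl⟩

theorem map_trivialRelations_le (hmono : Monotone F)
    (hmul : ∀ (i j : ℤ) (x y : R), x ∈ F i → y ∈ F j → x * y ∈ F (i + j))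
    (hgr : ∀ (i j : ℤ) (x y : R), x ∈ F i → y ∈ F j → x * y - y * x ∈ F (i + j - 1))
    (hadd : ∀ x ∈ F 1, ∀ y ∈ F 1, g (x + y) = g x + g y)
    (hmul0 : ∀ a ∈ F 0, ∀ x ∈ F 1, g (a * x) = g a * g x ∧ g (x * a) = g x * g a)
    (hcomm : ∀ x ∈ F 1, ∀ y ∈ F 1, g x * g y - g y * g x = g (x * y - y * x))
    {N : ℕ} (hN : 2 ≤ N) :
    (trivialRelations F N).map (graphEval g) ≤ wordFiltration F g (N - 1) := by
  rw [trivialRelations, AddMonoidHom.map_closure, AddSubgroup.closure_le]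
  rintro _ ⟨_, ht, rfl⟩
  rcases ht with ⟨l, ⟨rfl, hl⟩, ⟨b, hb, hb0⟩, rfl⟩ |
    ⟨l, l', ⟨rfl, hl⟩, hperm, rfl⟩ |
    ⟨l₁, l₂, x, y, hx, hy, -, rfl⟩ |
    ⟨l₁, l₂, l₃, a, x, y, ha, hx, hy, ⟨rfl, hl⟩, rfl⟩
  · simpa using graphWord_mem_of_letter_mem_F_zero hmul hgr hmul0 hcomm hl hb hb0 hN
  · simpa using graphWord_sub_mem_of_perm hgr hcomm hperm hl
  · have hsum : graphWord g (l₁ ++ [x + y] ++ l₂)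
        = graphWord g (l₁ ++ [x] ++ l₂) + graphWord g (l₁ ++ [y] ++ l₂) := by
      simp [hadd x hx y hy, ← Prod.mk_add_mk, mul_add, add_mul]
    simpa only [SetLike.mem_coe, map_sub, graphEval_single, one_zsmul, hsum,
      add_sub_cancel_left, sub_self] using zero_mem _
  · rw [show ((l₁ ++ [a * x] ++ l₂ ++ [y] ++ l₃).length : ℤ) - 1
        = (l₁ ++ l₂ ++ l₃).length + 1 by simp; omega]
    simpa using
      graphWord_sub_graphWord_mem_of_move_coeff hmono hmul hgr hmul0 hcomm ha hx hy hl

theorem snd_eq_zero_of_mem_wordFiltration (hmono : Monotone F) (hone : (1 : R) ∈ F 0)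
    (hmul : ∀ (i j : ℤ) (x y : R), x ∈ F i → y ∈ F j → x * y ∈ F (i + j))
    (hgr : ∀ (i j : ℤ) (x y : R), x ∈ F i → y ∈ F j → x * y - y * x ∈ F (i + j - 1))
    (hSymInj : ∀ k : ℕ, ∀ t ∈ degreePart F k,
      evalFS R t ∈ F ((k : ℤ) - 1) → t ∈ trivialRelations F k)
    (hadd : ∀ x ∈ F 1, ∀ y ∈ F 1, g (x + y) = g x + g y) (hg1 : g 1 = 1)
    (hmul0 : ∀ a ∈ F 0, ∀ x ∈ F 1, g (a * x) = g a * g x ∧ g (x * a) = g x * g a)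
    (hcomm : ∀ x ∈ F 1, ∀ y ∈ F 1, g x * g y - g y * g x = g (x * y - y * x)) :
    ∀ (n : ℕ) {p : R × A}, p ∈ wordFiltration F g n → p.1 = 0 → p.2 = 0 := by
  have hbase {p : R × A} (hp : p ∈ wordFiltration F g 1) (hp1 : p.1 = 0) : p.2 = 0 := by
    rw [(mem_wordFiltration_one hmono hone hadd hg1 hp).2, hp1]
    simpa using hadd 0 (zero_mem _) 0 (zero_mem _)
  intro n
  induction n with
  | zero => exact fun hp => hbase (wordFiltration_mono zero_le_one hp)
  | succ n ih =>
    intro p hp hp1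
    rcases Nat.eq_zero_or_pos n with rfl | hn
    · exact hbase hp hp1
    have hsplit := wordFiltration_succ_le (F := F) (g := g) n hp
    obtain ⟨_, ⟨t, ht, rfl⟩, q, hq, rfl⟩ := AddSubgroup.mem_sup.1 hsplit
    have htop : evalFS R t ∈ F ((n + 1 : ℕ) - 1 : ℤ) := by
      rw [← fst_graphEval (g := g), eq_neg_of_add_eq_zero_left hp1]
      simpa using neg_mem (fst_mem_of_mem_wordFiltration hmono hone hmul hq)
    have hlow := map_trivialRelations_le hmono hmul hgr hadd hmul0 hcomm
      (by omega : 2 ≤ n + 1) (AddSubgroup.mem_map_of_mem _ (hSymInj _ t ht htop))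
    exact ih (add_mem (by simpa using hlow) hq) hp1

theorem exists_mk_mem_wordFiltration (hneg : ∀ k : ℤ, k < 0 → F k = ⊥)
    (hSymSurj : ∀ k : ℕ, ∀ x ∈ F (k : ℤ), ∃ t ∈ degreePart F k,
      x - evalFS R t ∈ F ((k : ℤ) - 1)) :
    ∀ (k : ℕ), ∀ x ∈ F ((k : ℤ) - 1),
      ∃ y : A, (x, y) ∈ wordFiltration F g ((k : ℤ) - 1)
  | 0, x, hx => by
    rw [hneg _ (by norm_num), AddSubgroup.mem_bot] at hx
    exact ⟨0, by rw [hx, Prod.mk_zero_zero]; exact zero_mem _⟩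
  | k + 1, x, hx => by
    obtain ⟨t, ht, hxt⟩ := hSymSurj k x (by simpa using hx)
    obtain ⟨y, hy⟩ := exists_mk_mem_wordFiltration hneg hSymSurj k _ hxt
    refine ⟨y + (graphEval g t).2, ?_⟩
    have := add_mem (wordFiltration_mono (by omega) hy)
      (map_degreePart_le k (AddSubgroup.mem_map_of_mem (graphEval g) ht))
    have hsum : ((x, y + (graphEval g t).2) : R × A) = (x - evalFS R t, y) + graphEval g t :=
      by ext <;> simp
    rw [hsum]
    simpa using this

variable (F g) in
theorem wordFiltration_le_closure (n : ℤ) :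
    wordFiltration F g n ≤
      (Subring.closure ((fun x => (x, g x)) '' (F 1 : Set R))).toAddSubgroup := by
  refine (AddSubgroup.closure_le _).2 ?_
  rintro _ ⟨l, -, hl, rfl⟩
  exact Subring.list_prod_mem _ <| List.forall_mem_map.2 fun x hx =>
    Subring.subset_closure ⟨x, hl x hx, rfl⟩

theorem exists_mem_wordFiltration_of_mem_closure {p : R × A}
    (hp : p ∈ Subring.closure ((fun x => (x, g x)) '' (F 1 : Set R))) :
    ∃ n : ℕ, p ∈ wordFiltration F g n := by
  induction hp using Subring.closure_induction with
  | mem _ hp =>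
    obtain ⟨x, hx, rfl⟩ := hp
    exact ⟨1, mk_mem_wordFiltration_one hx⟩
  | zero => exact ⟨0, zero_mem _⟩
  | one => exact ⟨0, graphWord_mem_wordFiltration (l := []) (by simp) le_rfl⟩
  | add p q _ _ hp hq =>
    obtain ⟨m, hm⟩ := hp
    obtain ⟨n, hn⟩ := hq
    exact ⟨max m n,
      add_mem (wordFiltration_mono (by simp) hm) (wordFiltration_mono (by simp) hn)⟩
  | neg p _ hp =>
    obtain ⟨n, hn⟩ := hp
    exact ⟨n, neg_mem hn⟩
  | mul p q _ _ hp hq =>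
    obtain ⟨m, hm⟩ := hp
    obtain ⟨n, hn⟩ := hq
    exact ⟨m + n, by simpa using mul_mem_wordFiltration hm hn⟩

end PBW

/-- `T_{R₀}(R₁)/J` enters only through its universal property, so the conclusion says that `R`
has it as well. -/
theorem pbw_converse {R : Type*} [Ring R] (F : ℤ → AddSubgroup R)
    (hmono : Monotone F)
    (hneg : ∀ k : ℤ, k < 0 → F k = ⊥)
    (hone : (1 : R) ∈ F 0)
    (hmul : ∀ (i j : ℤ) (x y : R), x ∈ F i → y ∈ F j → x * y ∈ F (i + j))
    (hexh : ∀ x : R, ∃ k : ℤ, x ∈ F k)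
    (hgr : ∀ (i j : ℤ) (x y : R), x ∈ F i → y ∈ F j → x * y - y * x ∈ F (i + j - 1))
    (hSymSurj : ∀ k : ℕ, ∀ x ∈ F (k : ℤ), ∃ t ∈ degreePart F k,
      x - evalFS R t ∈ F ((k : ℤ) - 1))
    (hSymInj : ∀ k : ℕ, ∀ t ∈ degreePart F k,
      evalFS R t ∈ F ((k : ℤ) - 1) → t ∈ trivialRelations F k) :
    ∀ (A : Type*) [Ring A], ∀ g : R → A,
      (∀ x ∈ F 1, ∀ y ∈ F 1, g (x + y) = g x + g y) →
      g 1 = 1 →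
      (∀ a ∈ F 0, ∀ x ∈ F 1, g (a * x) = g a * g x ∧ g (x * a) = g x * g a) →
      (∀ x ∈ F 1, ∀ y ∈ F 1, g x * g y - g y * g x = g (x * y - y * x)) →
      ∃! Φ : R →+* A, ∀ x ∈ F 1, Φ x = g x := by
  intro A _ g hadd hg1 hmul0 hcomm
  set S := Subring.closure ((fun x => (x, g x)) '' (F 1 : Set R))
  have hS : ∀ x : R, ∃ y : A, (x, y) ∈ S := fun x => by
    obtain ⟨k, hk⟩ := hexh x
    obtain ⟨y, hy⟩ := exists_mk_mem_wordFiltration (g := g) hneg hSymSurj (k.toNat + 1) x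
      (hmono (by omega) hk)
    exact ⟨y, wordFiltration_le_closure F g _ hy⟩
  have hS0 : ∀ y : A, ((0 : R), y) ∈ S → y = 0 := fun y hy => by
    obtain ⟨n, hn⟩ := exists_mem_wordFiltration_of_mem_closure hy
    exact snd_eq_zero_of_mem_wordFiltration hmono hone hmul hgr hSymInj hadd hg1 hmul0 hcomm
      n hn rfl
  refine ⟨S.graphHom hS hS0, fun x hx => S.graphHom_eq_of_mem hS hS0 ?_, fun Ψ hΨ => ?_⟩
  · exact Subring.subset_closure ⟨x, hx, rfl⟩
  refine S.eq_graphHom_of_le_range hS hS0 (Subring.closure_le.2 ?_)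
  rintro _ ⟨x, hx, rfl⟩
  exact ⟨x, by simp [hΨ x hx]⟩

end
end

section
/- Let R₀ ⊆ R₁ ⊆ R be as in the PBW-converse setting (Gr(R) commutative and Sym_{R₀}(R₁/R₀) ≅ Gr(R)). Then an R₀-module M together with an R₀-linear map ∇ : R₁/R₀ → End_ℂ(M) satisfying the Leibniz condition ∇_δ(fm) = δ(f)·m + f·∇_δ(m) and the integrability condition ∇_{[δ,δ']} = [∇_δ, ∇_{δ'}] extends uniquely to a left R-module structure on M restricting to the given R₀-structure and with δ·m = ∇_δ(m) for δ ∈ R₁. -/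
set_option linter.unusedSectionVars false
set_option linter.unusedVariables false
set_option maxHeartbeats 1000000


noncomputable section

namespace LogConnAux
variable {R : Type*} [Ring R]

def Wgrp (F : ℤ → AddSubgroup R) (k : ℕ) : AddSubgroup (FormalSum R) :=
  AddSubgroup.closure {t | ∃ l : List R, l.length ≤ k ∧ (∀ x ∈ l, x ∈ F 1) ∧ t = Finsupp.single l 1}

theorem Wgrp_mono (F : ℤ → AddSubgroup R) {j k : ℕ} (h : j ≤ k) : Wgrp F j ≤ Wgrp F k :=
  AddSubgroup.closure_mono fun t ⟨l, hl, hx, ht⟩ => ⟨l, hl.trans h, hx, ht⟩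

theorem single_mem_Wgrp (F : ℤ → AddSubgroup R) {k : ℕ} {l : List R} (hl : l.length ≤ k)
    (hx : ∀ x ∈ l, x ∈ F 1) : (Finsupp.single l 1 : FormalSum R) ∈ Wgrp F k :=
  AddSubgroup.subset_closure ⟨l, hl, hx, rfl⟩

theorem evalFS_single (l : List R) (n : ℤ) : evalFS R (Finsupp.single l n) = n • l.prod := by
  simp [evalFS]

variable {M : Type*} [AddCommGroup M]

def wmap (ρ : R → M → M) (l : List R) (m : M) : M := l.foldr ρ m

def psiFS (ρ : R → M → M) : FormalSum R →+ (M → M) :=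
  Finsupp.liftAddHom fun l => (zmultiplesHom (M → M)) (wmap ρ l)

variable (F : ℤ → AddSubgroup R) (ρ : R → M → M)

@[simp] theorem wmap_nil (m : M) : wmap ρ [] m = m := rfl
@[simp] theorem wmap_cons (x : R) (l : List R) (m : M) :
    wmap ρ (x :: l) m = ρ x (wmap ρ l m) := rfl
theorem wmap_append (l₁ l₂ : List R) (m : M) :
    wmap ρ (l₁ ++ l₂) m = wmap ρ l₁ (wmap ρ l₂ m) := List.foldr_append ..

theorem psiFS_single (l : List R) (n : ℤ) (m : M) :
    psiFS ρ (Finsupp.single l n) m = n • wmap ρ l m := by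
  simp [psiFS]

theorem psi_add_apply (t s : FormalSum R) (m : M) :
    psiFS ρ (t + s) m = psiFS ρ t m + psiFS ρ s m := by rw [map_add]; rfl
theorem psi_neg_apply (t : FormalSum R) (m : M) :
    psiFS ρ (-t) m = -psiFS ρ t m := by rw [map_neg]; rfl
theorem psi_sub_apply (t s : FormalSum R) (m : M) :
    psiFS ρ (t - s) m = psiFS ρ t m - psiFS ρ s m := by rw [map_sub]; rfl
@[simp] theorem psi_zero_apply (m : M) : psiFS ρ (0 : FormalSum R) m = 0 := by
  rw [map_zero]; rfl

variable (haddr : ∀ x ∈ F 1, ∀ m m' : M, ρ x (m + m') = ρ x m + ρ x m')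

/-- `ρ x` as an additive hom, for `x ∈ F 1`. -/
def rhoHom (x : R) (hx : x ∈ F 1) : M →+ M := AddMonoidHom.mk' (ρ x) (haddr x hx)

theorem rhoHom_apply (x : R) (hx : x ∈ F 1) (m : M) : rhoHom F ρ haddr x hx m = ρ x m := rfl

include haddr in
theorem wmap_add {l : List R} (hl : ∀ x ∈ l, x ∈ F 1) (m m' : M) :
    wmap ρ l (m + m') = wmap ρ l m + wmap ρ l m' := by
  induction l with
  | nil => rfl
  | cons x l ih =>
    simp only [wmap_cons, ih (fun z hz => hl z (List.mem_cons_of_mem _ hz))]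
    exact haddr x (hl x (List.mem_cons_self)) _ _

/-- `wmap ρ l` as an additive hom. -/
def wmapHom (l : List R) (hl : ∀ x ∈ l, x ∈ F 1) : M →+ M :=
  AddMonoidHom.mk' (wmap ρ l) (fun m m' => wmap_add F ρ haddr hl m m')

include haddr in
theorem psiW_add {k : ℕ} {t : FormalSum R} (ht : t ∈ Wgrp F k) (m m' : M) :
    psiFS ρ t (m + m') = psiFS ρ t m + psiFS ρ t m' := by
  induction ht using AddSubgroup.closure_induction with
  | mem t ht =>
    obtain ⟨l, hl, hx, rfl⟩ := ht
    simp only [psiFS_single, one_smul]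
    exact wmap_add F ρ haddr hx m m'
  | zero => simp
  | add a b ha hb iha ihb => simp only [psi_add_apply, iha, ihb]; abel
  | neg a ha iha => simp only [psi_neg_apply, iha]; abel

theorem prod_mem_F (hone : (1 : R) ∈ F 0)
    (hmul : ∀ (i j : ℤ) (x y : R), x ∈ F i → y ∈ F j → x * y ∈ F (i + j))
    {l : List R} (hx : ∀ x ∈ l, x ∈ F 1) : l.prod ∈ F l.length := by
  induction l with
  | nil => simpa using hone
  | cons x l ih =>
    have := hmul 1 l.length x l.prod (hx x (List.mem_cons_self))
      (ih fun z hz => hx z (List.mem_cons_of_mem _ hz))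
    simp only [List.prod_cons, List.length_cons]
    convert this using 2
    push_cast; ring

theorem eval_Wgrp (hone : (1 : R) ∈ F 0)
    (hmul : ∀ (i j : ℤ) (x y : R), x ∈ F i → y ∈ F j → x * y ∈ F (i + j))
    (hmono : Monotone F) {k : ℕ} {t : FormalSum R} (ht : t ∈ Wgrp F k) :
    evalFS R t ∈ F k := by
  induction ht using AddSubgroup.closure_induction with
  | mem t ht =>
    obtain ⟨l, hl, hx, rfl⟩ := ht
    rw [evalFS_single, one_smul]
    exact hmono (by exact_mod_cast hl) (prod_mem_F F hone hmul hx)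
  | zero => simpa using zero_mem _
  | add a b ha hb iha ihb => rw [map_add]; exact add_mem iha ihb
  | neg a ha iha => rw [map_neg]; exact neg_mem iha

def word' (F : ℤ → AddSubgroup R) (k : ℕ) (l : List R) : Prop :=
  l.length = k ∧ ∀ x ∈ l, x ∈ F 1

def degreePart' (F : ℤ → AddSubgroup R) (k : ℕ) : AddSubgroup (FormalSum R) :=
  AddSubgroup.closure {t | ∃ l, word' F k l ∧ t = Finsupp.single l 1}

theorem degreePart_le_Wgrp (k : ℕ) : degreePart' F k ≤ Wgrp F k :=
  AddSubgroup.closure_mono fun t ⟨l, ⟨hlen, hx⟩, ht⟩ => ⟨l, hlen.le, hx, ht⟩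

theorem decompose {k : ℕ} {t : FormalSum R} (ht : t ∈ Wgrp F (k + 1)) :
    ∃ td ∈ degreePart' F (k + 1), t - td ∈ Wgrp F k := by
  induction ht using AddSubgroup.closure_induction with
  | mem t ht =>
    obtain ⟨l, hl, hx, rfl⟩ := ht
    by_cases h : l.length = k + 1
    · exact ⟨Finsupp.single l 1, AddSubgroup.subset_closure ⟨l, ⟨h, hx⟩, rfl⟩,
        by simpa using zero_mem _⟩
    · exact ⟨0, zero_mem _, by
        simpa using single_mem_Wgrp F (by omega) hx⟩
  | zero => exact ⟨0, zero_mem _, by simpa using zero_mem _⟩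
  | add a b ha hb iha ihb =>
    obtain ⟨ta, hta, ha'⟩ := iha
    obtain ⟨tb, htb, hb'⟩ := ihb
    exact ⟨ta + tb, add_mem hta htb, by
      have : a + b - (ta + tb) = (a - ta) + (b - tb) := by abel
      rw [this]; exact add_mem ha' hb'⟩
  | neg a ha iha =>
    obtain ⟨ta, hta, ha'⟩ := iha
    exact ⟨-ta, neg_mem hta, by
      have : -a - -ta = -(a - ta) := by abel
      rw [this]; exact neg_mem ha'⟩

def consHom (x : R) : FormalSum R →+ FormalSum R := Finsupp.mapDomain.addMonoidHom (x :: ·)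

theorem consHom_single (x : R) (l : List R) (n : ℤ) :
    consHom x (Finsupp.single l n) = Finsupp.single (x :: l) n := Finsupp.mapDomain_single

theorem consHom_mem_Wgrp {x : R} (hx : x ∈ F 1) {k : ℕ} {t : FormalSum R}
    (ht : t ∈ Wgrp F k) : consHom x t ∈ Wgrp F (k + 1) := by
  induction ht using AddSubgroup.closure_induction with
  | mem t ht =>
    obtain ⟨l, hl, hxl, rfl⟩ := ht
    rw [consHom_single]
    exact single_mem_Wgrp F (by simpa using hl) (by
      intro z hz
      rcases List.mem_cons.mp hz with h | h
      · exact h ▸ hx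
      · exact hxl z h)
  | zero => simpa using zero_mem _
  | add a b ha hb iha ihb => rw [map_add]; exact add_mem iha ihb
  | neg a ha iha => rw [map_neg]; exact neg_mem iha

theorem eval_consHom (x : R) (t : FormalSum R) :
    evalFS R (consHom x t) = x * evalFS R t := by
  induction t using Finsupp.induction_linear with
  | zero => simp
  | add a b ha hb => rw [map_add, map_add, map_add, mul_add, ha, hb]
  | single l n =>
    rw [consHom_single, evalFS_single, evalFS_single, List.prod_cons, mul_smul_comm]

include haddr in
theorem psi_consHom {x : R} (hx : x ∈ F 1) (t : FormalSum R) (m : M) :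
    psiFS ρ (consHom x t) m = ρ x (psiFS ρ t m) := by
  induction t using Finsupp.induction_linear with
  | zero => rw [map_zero]; exact (psi_zero_apply ρ m).trans ((rhoHom F ρ haddr x hx).map_zero).symm
  | add a b ha hb =>
    rw [map_add, psi_add_apply, psi_add_apply, ha, hb]
    exact ((rhoHom F ρ haddr x hx).map_add _ _).symm
  | single l n =>
    rw [consHom_single, psiFS_single, psiFS_single, wmap_cons]
    exact ((rhoHom F ρ haddr x hx).map_zsmul _ _).symm

section Perm
variable (haddr : ∀ x ∈ F 1, ∀ m m' : M, ρ x (m + m') = ρ x m + ρ x m')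
variable (hgr : ∀ (i j : ℤ) (x y : R), x ∈ F i → y ∈ F j → x * y - y * x ∈ F (i + j - 1))
variable (hint : ∀ x ∈ F 1, ∀ y ∈ F 1, ∀ m : M,
    ρ (x * y - y * x) m = ρ x (ρ y m) - ρ y (ρ x m))

include haddr hgr hint in
theorem perm_lemma : ∀ {l l' : List R}, l.Perm l' → (∀ z ∈ l, z ∈ F 1) →
    ∃ t' ∈ Wgrp F (l.length - 1), evalFS R t' = l.prod - l'.prod ∧
      ∀ m : M, psiFS ρ t' m = wmap ρ l m - wmap ρ l' m := by
  intro l l' hp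
  induction hp with
  | nil => exact fun _ => ⟨0, zero_mem _, by simp, fun m => by simp⟩
  | @cons x l₁ l₂ hp ih =>
    intro hl
    have hx : x ∈ F 1 := hl x (List.mem_cons_self)
    by_cases hnil : l₁ = []
    · subst hnil
      have : l₂ = [] := hp.symm.eq_nil
      subst this
      exact ⟨0, zero_mem _, by simp, fun m => by simp⟩
    · obtain ⟨t'', ht'', he, hψ⟩ := ih (fun z hz => hl z (List.mem_cons_of_mem _ hz))
      have hlen : l₁.length - 1 + 1 = (x :: l₁).length - 1 := by
        have := List.length_pos_iff.mpr hnil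
        simp only [List.length_cons]
        omega
      refine ⟨consHom x t'', hlen ▸ consHom_mem_Wgrp F hx ht'', ?_, ?_⟩
      · rw [eval_consHom, he, mul_sub, List.prod_cons, List.prod_cons]
      · intro m
        rw [psi_consHom F ρ haddr hx, hψ m]
        simp only [wmap_cons]
        exact (rhoHom F ρ haddr x hx).map_sub _ _
  | swap x y L =>
    intro hl
    have hy : y ∈ F 1 := hl y (List.mem_cons_self)
    have hx : x ∈ F 1 := hl x (List.mem_cons_of_mem _ (List.mem_cons_self))
    have hL : ∀ z ∈ L, z ∈ F 1 := fun z hz =>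
      hl z (List.mem_cons_of_mem _ (List.mem_cons_of_mem _ hz))
    have hw : y * x - x * y ∈ F 1 := by
      have := hgr 1 1 y x hy hx; norm_num at this; exact this
    refine ⟨Finsupp.single ((y * x - x * y) :: L) 1,
      single_mem_Wgrp F (by simp) ?_, ?_, ?_⟩
    · intro z hz
      rcases List.mem_cons.mp hz with h | h
      · exact h ▸ hw
      · exact hL z h
    · rw [evalFS_single, one_smul]
      simp only [List.prod_cons]
      rw [sub_mul, mul_assoc, mul_assoc]
    · intro m
      rw [psiFS_single, one_smul]
      simp only [wmap_cons]
      exact hint y hy x hx _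
  | @trans l₁ l₂ l₃ hp₁ hp₂ ih₁ ih₂ =>
    intro hl
    have hl₂ : ∀ z ∈ l₂, z ∈ F 1 := fun z hz => hl z (hp₁.mem_iff.mpr hz)
    obtain ⟨t₁, ht₁, he₁, hψ₁⟩ := ih₁ hl
    obtain ⟨t₂, ht₂, he₂, hψ₂⟩ := ih₂ hl₂
    refine ⟨t₁ + t₂, add_mem ht₁ (by rw [hp₁.length_eq]; exact ht₂), ?_, ?_⟩
    · rw [map_add, he₁, he₂]; abel
    · intro m; rw [psi_add_apply, hψ₁ m, hψ₂ m]; abel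
end Perm

section Gsec
variable (S₀ : Subring R) [Module S₀ M]

def Gk (k : ℕ) : AddSubgroup (FormalSum R) where
  carrier := {s | ∃ t' ∈ Wgrp F k, ∃ d : S₀,
    evalFS R s = evalFS R t' + (d : R) ∧ ∀ m : M, psiFS ρ s m = psiFS ρ t' m + d • m}
  zero_mem' := ⟨0, zero_mem _, 0, by simp, fun m => by simp⟩
  add_mem' := by
    rintro a b ⟨t₁, ht₁, d₁, he₁, hp₁⟩ ⟨t₂, ht₂, d₂, he₂, hp₂⟩
    refine ⟨t₁ + t₂, add_mem ht₁ ht₂, d₁ + d₂, ?_, ?_⟩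
    · rw [map_add, map_add, he₁, he₂]; push_cast; abel
    · intro m
      rw [psi_add_apply, hp₁ m, hp₂ m, psi_add_apply, add_smul]; abel
  neg_mem' := by
    rintro a ⟨t₁, ht₁, d₁, he₁, hp₁⟩
    refine ⟨-t₁, neg_mem ht₁, -d₁, ?_, ?_⟩
    · rw [map_neg, map_neg, he₁]; push_cast; abel
    · intro m
      rw [psi_neg_apply, hp₁ m, psi_neg_apply, neg_smul]; abel

theorem mem_Gk {k : ℕ} {s : FormalSum R} :
    s ∈ Gk F ρ S₀ k ↔ ∃ t' ∈ Wgrp F k, ∃ d : S₀,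
      evalFS R s = evalFS R t' + (d : R) ∧ ∀ m : M, psiFS ρ s m = psiFS ρ t' m + d • m :=
  Iff.rfl

variable (hS₀ : (S₀ : Set R) = (F 0 : Set R))

include hS₀ in
theorem mem_S0 {a : R} (h : a ∈ F 0) : a ∈ S₀ := by
  rw [← SetLike.mem_coe, hS₀]; exact h

variable (hmono : Monotone F)
variable (hmul : ∀ (i j : ℤ) (x y : R), x ∈ F i → y ∈ F j → x * y ∈ F (i + j))
variable (hgr : ∀ (i j : ℤ) (x y : R), x ∈ F i → y ∈ F j → x * y - y * x ∈ F (i + j - 1))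
variable (hrestr : ∀ (a : S₀) (m : M), ρ (a : R) m = a • m)
variable (hlin : ∀ (a : S₀), ∀ x ∈ F 1, ∀ m : M, ρ ((a : R) * x) m = a • ρ x m)
variable (hLeibniz : ∀ x ∈ F 1, ∀ (a c : S₀) (m : M),
    (c : R) = x * (a : R) - (a : R) * x → ρ x ((a : S₀) • m) = c • m + a • ρ x m)

include hS₀ hmono hmul hgr haddr hrestr hlin hLeibniz in
theorem gen1_mem (k : ℕ) {l₁ l₂ : List R} {a : R} (ha : a ∈ F 0)
    (h₁ : ∀ w ∈ l₁, w ∈ F 1) (h₂ : ∀ w ∈ l₂, w ∈ F 1)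
    (hlen : (l₁ ++ a :: l₂).length = k + 1) :
    (Finsupp.single (l₁ ++ a :: l₂) 1 : FormalSum R) ∈ Gk F ρ S₀ k := by
  have haS : a ∈ S₀ := mem_S0 F S₀ hS₀ ha
  cases l₂ with
  | cons y l₂' =>
    have hyF : y ∈ F 1 := h₂ y (List.mem_cons_self)
    have hay : a * y ∈ F 1 := by
      have := hmul 0 1 a y ha hyF; norm_num at this; exact this
    refine ⟨Finsupp.single (l₁ ++ (a * y) :: l₂') 1, single_mem_Wgrp F ?_ ?_, 0, ?_, ?_⟩
    · simp only [List.length_append, List.length_cons] at hlen ⊢; omega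
    · intro w hw
      rcases List.mem_append.mp hw with h | h
      · exact h₁ w h
      · rcases List.mem_cons.mp h with h | h
        · exact h ▸ hay
        · exact h₂ w (List.mem_cons_of_mem _ h)
    · rw [evalFS_single, evalFS_single, one_smul, one_smul]
      simp [List.prod_append, List.prod_cons, mul_assoc]
    · intro m
      rw [psiFS_single, psiFS_single, one_smul, one_smul, wmap_append, wmap_append]
      simp only [wmap_cons, ZeroMemClass.coe_zero, zero_smul, add_zero]
      congr 1
      have e1 : ρ a (ρ y (wmap ρ l₂' m)) = (⟨a, haS⟩ : S₀) • ρ y (wmap ρ l₂' m) :=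
        hrestr ⟨a, haS⟩ _
      have e2 : ρ (a * y) (wmap ρ l₂' m) = (⟨a, haS⟩ : S₀) • ρ y (wmap ρ l₂' m) :=
        hlin ⟨a, haS⟩ y hyF _
      rw [e1, e2]
  | nil =>
    rcases List.eq_nil_or_concat l₁ with rfl | ⟨l₁', x, rfl⟩
    · refine ⟨0, zero_mem _, ⟨a, haS⟩, ?_, ?_⟩
      · rw [evalFS_single, one_smul, map_zero, zero_add]
        simp
      · intro m
        rw [psiFS_single, one_smul, psi_zero_apply, zero_add]
        simp only [List.nil_append, wmap_cons, wmap_nil]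
        exact hrestr ⟨a, haS⟩ m
    · simp only [List.concat_eq_append] at h₁ hlen ⊢
      have hxF : x ∈ F 1 := h₁ x (by simp)
      have hl₁' : ∀ w ∈ l₁', w ∈ F 1 := fun w hw => h₁ w (by simp [hw])
      have hcR : x * a - a * x ∈ F 0 := by
        have := hgr 1 0 x a hxF ha; norm_num at this; exact this
      have hcS : x * a - a * x ∈ S₀ := mem_S0 F S₀ hS₀ hcR
      have hax : a * x ∈ F 1 := by
        have := hmul 0 1 a x ha hxF; norm_num at this; exact this
      have hlen' : (l₁'.length + 1 : ℕ) ≤ k := by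
        simp only [List.length_append, List.length_cons, List.length_nil] at hlen; omega
      refine ⟨Finsupp.single (l₁' ++ [a * x]) 1 + Finsupp.single (l₁' ++ [x * a - a * x]) 1,
        add_mem (single_mem_Wgrp F (by simpa using hlen') ?_)
          (single_mem_Wgrp F (by simpa using hlen') ?_), 0, ?_, ?_⟩
      · intro w hw
        rcases List.mem_append.mp hw with h | h
        · exact hl₁' w h
        · simp at h; exact h ▸ hax
      · intro w hw
        rcases List.mem_append.mp hw with h | h
        · exact hl₁' w h
        · simp at h; exact h ▸ hmono (by norm_num) hcR
      · rw [map_add, evalFS_single, evalFS_single, evalFS_single, one_smul, one_smul, one_smul]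
        simp only [ZeroMemClass.coe_zero, add_zero, List.append_assoc, List.cons_append,
          List.nil_append, List.prod_append, List.prod_cons, List.prod_nil, mul_one]
        noncomm_ring
      · intro m
        rw [psiFS_single, one_smul, psi_add_apply, psiFS_single, psiFS_single, one_smul, one_smul]
        simp only [ZeroMemClass.coe_zero, zero_smul, add_zero, List.append_assoc,
          List.cons_append, List.nil_append]
        rw [wmap_append, wmap_append, wmap_append]
        simp only [wmap_cons, wmap_nil]
        have e0 : ρ a m = (⟨a, haS⟩ : S₀) • m := hrestr ⟨a, haS⟩ m
        have e1 : ρ x ((⟨a, haS⟩ : S₀) • m) =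
            (⟨x * a - a * x, hcS⟩ : S₀) • m + (⟨a, haS⟩ : S₀) • ρ x m :=
          hLeibniz x hxF ⟨a, haS⟩ ⟨x * a - a * x, hcS⟩ m rfl
        have e2 : ρ (a * x) m = (⟨a, haS⟩ : S₀) • ρ x m := hlin ⟨a, haS⟩ x hxF m
        have e3 : ρ (x * a - a * x) m = (⟨x * a - a * x, hcS⟩ : S₀) • m :=
          hrestr ⟨x * a - a * x, hcS⟩ m
        rw [e0, e1, e2, e3, ← wmap_add F ρ haddr hl₁']
        exact congrArg (wmap ρ l₁') (add_comm _ _)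

include hS₀ hmono hmul hgr haddr hrestr hlin hLeibniz in
theorem adj_mem (k : ℕ) {l₁ rest : List R} {a x z : R} (ha : a ∈ F 0) (hx : x ∈ F 1)
    (hz : z ∈ F 1) (h₁ : ∀ w ∈ l₁, w ∈ F 1) (hr : ∀ w ∈ rest, w ∈ F 1)
    (hlen : (l₁ ++ a * x :: z :: rest).length = k + 1) :
    (Finsupp.single (l₁ ++ a * x :: z :: rest) 1
      - Finsupp.single (l₁ ++ x :: a * z :: rest) 1 : FormalSum R) ∈ Gk F ρ S₀ k := by
  have haS : a ∈ S₀ := mem_S0 F S₀ hS₀ ha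
  have hcR : x * a - a * x ∈ F 0 := by
    have := hgr 1 0 x a hx ha; norm_num at this; exact this
  have hcS : x * a - a * x ∈ S₀ := mem_S0 F S₀ hS₀ hcR
  have hzr : ∀ w ∈ z :: rest, w ∈ F 1 := by
    intro w hw
    rcases List.mem_cons.mp hw with h | h
    · exact h ▸ hz
    · exact hr w h
  have hcword : (Finsupp.single (l₁ ++ (x * a - a * x) :: z :: rest) 1 : FormalSum R)
      ∈ Gk F ρ S₀ k := by
    apply gen1_mem F ρ haddr S₀ hS₀ hmono hmul hgr hrestr hlin hLeibniz k hcR h₁ hzr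
    simp only [List.length_append, List.length_cons] at hlen ⊢; omega
  have hmain : (Finsupp.single (l₁ ++ a * x :: z :: rest) 1
      - Finsupp.single (l₁ ++ x :: a * z :: rest) 1
      + Finsupp.single (l₁ ++ (x * a - a * x) :: z :: rest) 1 : FormalSum R)
      ∈ Gk F ρ S₀ k := by
    refine ⟨0, zero_mem _, 0, ?_, ?_⟩
    · rw [map_add, map_sub, evalFS_single, evalFS_single, evalFS_single,
        one_smul, one_smul, one_smul]
      simp only [map_zero, ZeroMemClass.coe_zero, add_zero, zero_add,
        List.prod_append, List.prod_cons]
      noncomm_ring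
    · intro m
      rw [psi_add_apply, psi_sub_apply, psiFS_single, psiFS_single, psiFS_single,
        one_smul, one_smul, one_smul]
      simp only [psi_zero_apply, ZeroMemClass.coe_zero, zero_smul, add_zero, zero_add]
      rw [wmap_append, wmap_append, wmap_append]
      simp only [wmap_cons]
      have e1 : ρ (a * x) (ρ z (wmap ρ rest m)) =
          (⟨a, haS⟩ : S₀) • ρ x (ρ z (wmap ρ rest m)) := hlin ⟨a, haS⟩ x hx _
      have e2 : ρ (a * z) (wmap ρ rest m) =
          (⟨a, haS⟩ : S₀) • ρ z (wmap ρ rest m) := hlin ⟨a, haS⟩ z hz _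
      have eL : ρ x ((⟨a, haS⟩ : S₀) • ρ z (wmap ρ rest m)) =
          (⟨x * a - a * x, hcS⟩ : S₀) • ρ z (wmap ρ rest m)
            + (⟨a, haS⟩ : S₀) • ρ x (ρ z (wmap ρ rest m)) :=
        hLeibniz x hx _ _ _ rfl
      have e3 : ρ (x * a - a * x) (ρ z (wmap ρ rest m)) =
          (⟨x * a - a * x, hcS⟩ : S₀) • ρ z (wmap ρ rest m) := hrestr ⟨x * a - a * x, hcS⟩ _
      rw [e1, e2, eL, e3, wmap_add F ρ haddr h₁]
      abel
  have := (Gk F ρ S₀ k).sub_mem hmain hcword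
  simpa using this

include hS₀ hmono hmul hgr haddr hrestr hlin hLeibniz in
theorem gen4_mem (k : ℕ) (l₂ : List R) :
    ∀ (l₁ l₃ : List R) (a x y : R), a ∈ F 0 → x ∈ F 1 → y ∈ F 1 →
      (∀ w ∈ l₁, w ∈ F 1) → (∀ w ∈ l₂, w ∈ F 1) → (∀ w ∈ l₃, w ∈ F 1) →
      (l₁ ++ [a * x] ++ l₂ ++ [y] ++ l₃).length = k + 1 →
      (Finsupp.single (l₁ ++ [a * x] ++ l₂ ++ [y] ++ l₃) 1
        - Finsupp.single (l₁ ++ [x] ++ l₂ ++ [a * y] ++ l₃) 1 : FormalSum R)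
        ∈ Gk F ρ S₀ k := by
  induction l₂ with
  | nil =>
    intro l₁ l₃ a x y ha hx hy h₁ h₂ h₃ hlen
    have e1 : l₁ ++ [a * x] ++ [] ++ [y] ++ l₃ = l₁ ++ a * x :: y :: l₃ := by simp
    have e2 : l₁ ++ [x] ++ [] ++ [a * y] ++ l₃ = l₁ ++ x :: a * y :: l₃ := by simp
    rw [e1] at hlen
    rw [e1, e2]
    exact adj_mem F ρ haddr S₀ hS₀ hmono hmul hgr hrestr hlin hLeibniz k ha hx hy h₁ h₃ hlen
  | cons z l₂' ih =>
    intro l₁ l₃ a x y ha hx hy h₁ h₂ h₃ hlen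
    have hzF : z ∈ F 1 := h₂ z (List.mem_cons_self)
    have h₂' : ∀ w ∈ l₂', w ∈ F 1 := fun w hw => h₂ w (List.mem_cons_of_mem _ hw)
    have hrest : ∀ w ∈ l₂' ++ [y] ++ l₃, w ∈ F 1 := by
      intro w hw
      rcases List.mem_append.mp hw with h | h
      · rcases List.mem_append.mp h with h | h
        · exact h₂' w h
        · simp at h; exact h ▸ hy
      · exact h₃ w h
    have hl₁x : ∀ w ∈ l₁ ++ [x], w ∈ F 1 := by
      intro w hw
      rcases List.mem_append.mp hw with h | h
      · exact h₁ w h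
      · simp at h; exact h ▸ hx
    have e1 : l₁ ++ [a * x] ++ (z :: l₂') ++ [y] ++ l₃
        = l₁ ++ a * x :: z :: (l₂' ++ [y] ++ l₃) := by simp
    have emid : l₁ ++ [x] ++ [a * z] ++ l₂' ++ [y] ++ l₃
        = l₁ ++ x :: a * z :: (l₂' ++ [y] ++ l₃) := by simp
    have e2 : l₁ ++ [x] ++ (z :: l₂') ++ [a * y] ++ l₃
        = l₁ ++ [x] ++ [z] ++ l₂' ++ [a * y] ++ l₃ := by simp
    have hlen1 : (l₁ ++ a * x :: z :: (l₂' ++ [y] ++ l₃)).length = k + 1 := by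
      rw [← e1]; exact hlen
    have hadj := adj_mem F ρ haddr S₀ hS₀ hmono hmul hgr hrestr hlin hLeibniz k
      ha hx hzF h₁ hrest hlen1
    have hlen2 : (l₁ ++ [x] ++ [a * z] ++ l₂' ++ [y] ++ l₃).length = k + 1 := by
      simp only [List.length_append, List.length_cons, List.length_nil] at hlen ⊢; omega
    have hih := ih (l₁ ++ [x]) l₃ a z y ha hzF hy hl₁x h₂' h₃ (by
      simpa only [List.append_assoc, List.cons_append, List.nil_append,
        List.length_append, List.length_cons, List.length_nil] using hlen2)
    rw [show (l₁ ++ [x]) ++ [a * z] ++ l₂' ++ [y] ++ l₃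
        = l₁ ++ x :: a * z :: (l₂' ++ [y] ++ l₃) from by simp,
      show (l₁ ++ [x]) ++ [z] ++ l₂' ++ [a * y] ++ l₃
        = l₁ ++ [x] ++ (z :: l₂') ++ [a * y] ++ l₃ from by simp] at hih
    rw [e1]
    have := add_mem hadj hih
    rw [sub_add_sub_cancel] at this
    exact this

variable (haddl : ∀ x ∈ F 1, ∀ y ∈ F 1, ∀ m : M, ρ (x + y) m = ρ x m + ρ y m)

include haddl haddr in
theorem gen3_mem (k : ℕ) {l₁ l₂ : List R} {x y : R} (hx : x ∈ F 1) (hy : y ∈ F 1)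
    (h₁ : ∀ w ∈ l₁, w ∈ F 1) (h₂ : ∀ w ∈ l₂, w ∈ F 1) :
    (Finsupp.single (l₁ ++ [x + y] ++ l₂) 1 - Finsupp.single (l₁ ++ [x] ++ l₂) 1
      - Finsupp.single (l₁ ++ [y] ++ l₂) 1 : FormalSum R) ∈ Gk F ρ S₀ k := by
  refine ⟨0, zero_mem _, 0, ?_, ?_⟩
  · rw [map_sub, map_sub, evalFS_single, evalFS_single, evalFS_single,
      one_smul, one_smul, one_smul]
    simp only [map_zero, ZeroMemClass.coe_zero, add_zero, zero_add,
      List.prod_append, List.prod_cons, List.prod_nil, mul_one]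
    noncomm_ring
  · intro m
    rw [psi_sub_apply, psi_sub_apply, psiFS_single, psiFS_single, psiFS_single,
      one_smul, one_smul, one_smul]
    simp only [psi_zero_apply, ZeroMemClass.coe_zero, zero_smul, add_zero, zero_add]
    simp only [wmap_append, wmap_cons, wmap_nil]
    rw [haddl x hx y hy, wmap_add F ρ haddr h₁]
    abel

variable (hint : ∀ x ∈ F 1, ∀ y ∈ F 1, ∀ m : M,
    ρ (x * y - y * x) m = ρ x (ρ y m) - ρ y (ρ x m))

def trivialRelations' (F : ℤ → AddSubgroup R) (k : ℕ) : AddSubgroup (FormalSum R) :=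
  AddSubgroup.closure
    {t | (∃ l, word' F k l ∧ (∃ x ∈ l, x ∈ F 0) ∧ t = Finsupp.single l 1) ∨
      (∃ l l', word' F k l ∧ List.Perm l l' ∧
        t = Finsupp.single l 1 - Finsupp.single l' 1) ∨
      (∃ (l₁ l₂ : List R) (x y : R), x ∈ F 1 ∧ y ∈ F 1 ∧
        word' F k (l₁ ++ [x + y] ++ l₂) ∧
        t = Finsupp.single (l₁ ++ [x + y] ++ l₂) 1 - Finsupp.single (l₁ ++ [x] ++ l₂) 1 -
          Finsupp.single (l₁ ++ [y] ++ l₂) 1) ∨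
      (∃ (l₁ l₂ l₃ : List R) (a x y : R), a ∈ F 0 ∧ x ∈ F 1 ∧ y ∈ F 1 ∧
        word' F k (l₁ ++ [a * x] ++ l₂ ++ [y] ++ l₃) ∧
        t = Finsupp.single (l₁ ++ [a * x] ++ l₂ ++ [y] ++ l₃) 1 -
          Finsupp.single (l₁ ++ [x] ++ l₂ ++ [a * y] ++ l₃) 1)}

include hS₀ hmono hmul hgr haddr hrestr hlin hLeibniz haddl hint in
theorem trivialRel_le_Gk (k : ℕ) : trivialRelations' F (k + 1) ≤ Gk F ρ S₀ k := by
  rw [trivialRelations', AddSubgroup.closure_le]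
  rintro t (⟨l, ⟨hlen, hletters⟩, ⟨aa, hal, ha0⟩, rfl⟩ |
    ⟨l, l', ⟨hlen, hletters⟩, hperm, rfl⟩ |
    ⟨l₁, l₂, x, y, hx, hy, ⟨hlen, hletters⟩, rfl⟩ |
    ⟨l₁, l₂, l₃, aa, x, y, ha, hx, hy, ⟨hlen, hletters⟩, rfl⟩)
  · obtain ⟨s₁, s₂, rfl⟩ := List.append_of_mem hal
    refine gen1_mem F ρ haddr S₀ hS₀ hmono hmul hgr hrestr hlin hLeibniz k ha0
      (fun w hw => hletters w (List.mem_append.mpr (Or.inl hw)))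
      (fun w hw => hletters w (List.mem_append.mpr (Or.inr (List.mem_cons_of_mem _ hw))))
      hlen
  · obtain ⟨t', ht', he, hψ⟩ := perm_lemma F ρ haddr hgr hint hperm hletters
    have hlk : l.length - 1 = k := by omega
    refine ⟨t', hlk ▸ ht', 0, ?_, ?_⟩
    · rw [map_sub, evalFS_single, evalFS_single, one_smul, one_smul, he]; simp
    · intro m
      rw [psi_sub_apply, psiFS_single, psiFS_single, one_smul, one_smul, hψ m]; simp
  · have h₁ : ∀ w ∈ l₁, w ∈ F 1 := fun w hw =>
      hletters w (by simp [hw])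
    have h₂ : ∀ w ∈ l₂, w ∈ F 1 := fun w hw =>
      hletters w (by simp [hw])
    exact gen3_mem F ρ haddr S₀ haddl k hx hy h₁ h₂
  · have h₁ : ∀ w ∈ l₁, w ∈ F 1 := fun w hw => hletters w (by simp [hw])
    have h₂ : ∀ w ∈ l₂, w ∈ F 1 := fun w hw => hletters w (by simp [hw])
    have h₃ : ∀ w ∈ l₃, w ∈ F 1 := fun w hw => hletters w (by simp [hw])
    exact gen4_mem F ρ haddr S₀ hS₀ hmono hmul hgr hrestr hlin hLeibniz k l₂
      l₁ l₃ aa x y ha hx hy h₁ h₂ h₃ hlen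

end Gsec

section Main
variable (S₀ : Subring R) [Module S₀ M]
variable (hS₀ : (S₀ : Set R) = (F 0 : Set R))
variable (hmono : Monotone F)
variable (hone : (1 : R) ∈ F 0)
variable (hneg : ∀ k : ℤ, k < 0 → F k = ⊥)
variable (hmul : ∀ (i j : ℤ) (x y : R), x ∈ F i → y ∈ F j → x * y ∈ F (i + j))
variable (hgr : ∀ (i j : ℤ) (x y : R), x ∈ F i → y ∈ F j → x * y - y * x ∈ F (i + j - 1))
variable (haddl : ∀ x ∈ F 1, ∀ y ∈ F 1, ∀ m : M, ρ (x + y) m = ρ x m + ρ y m)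
variable (hrestr : ∀ (a : S₀) (m : M), ρ (a : R) m = a • m)
variable (hlin : ∀ (a : S₀), ∀ x ∈ F 1, ∀ m : M, ρ ((a : R) * x) m = a • ρ x m)
variable (hLeibniz : ∀ x ∈ F 1, ∀ (a c : S₀) (m : M),
    (c : R) = x * (a : R) - (a : R) * x → ρ x ((a : S₀) • m) = c • m + a • ρ x m)
variable (hint : ∀ x ∈ F 1, ∀ y ∈ F 1, ∀ m : M,
    ρ (x * y - y * x) m = ρ x (ρ y m) - ρ y (ρ x m))

include hS₀ in
theorem coe_mem_F0 (c : S₀) : (c : R) ∈ F 0 := by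
  have : (c : R) ∈ (S₀ : Set R) := c.2
  rwa [hS₀] at this

include hS₀ hmono hone hmul hgr haddl hrestr hlin hLeibniz hint haddr in
theorem key_lemma
    (hSymInj : ∀ k : ℕ, ∀ t ∈ degreePart' F k,
      evalFS R t ∈ F ((k : ℤ) - 1) → t ∈ trivialRelations' F k) :
    ∀ (k : ℕ) (t : FormalSum R), t ∈ Wgrp F k → ∀ c : S₀, evalFS R t = (c : R) →
      ∀ m : M, psiFS ρ t m = c • m := by
  intro k
  induction k with
  | zero =>
    intro t ht c hc m
    have H : ∃ d : S₀, evalFS R t = (d : R) ∧ ∀ m : M, psiFS ρ t m = d • m := by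
      clear hc
      induction ht using AddSubgroup.closure_induction with
      | mem s hs =>
        obtain ⟨l, hl, _, rfl⟩ := hs
        have : l = [] := List.length_eq_zero_iff.mp (Nat.le_zero.mp hl)
        subst this
        exact ⟨1, by simp [evalFS_single], fun m => by simp [psiFS_single]⟩
      | zero => exact ⟨0, by simp, fun m => by simp⟩
      | add a b ha hb iha ihb =>
        obtain ⟨da, hea, hpa⟩ := iha
        obtain ⟨db, heb, hpb⟩ := ihb
        exact ⟨da + db, by rw [map_add, hea, heb]; push_cast; ring, fun m => by
          rw [psi_add_apply, hpa m, hpb m, add_smul]⟩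
      | neg a ha iha =>
        obtain ⟨da, hea, hpa⟩ := iha
        exact ⟨-da, by rw [map_neg, hea]; push_cast; ring, fun m => by
          rw [psi_neg_apply, hpa m, neg_smul]⟩
    obtain ⟨d, hd, hm⟩ := H
    have hcd : c = d := Subtype.coe_injective (hc.symm.trans hd)
    rw [hm m, hcd]
  | succ k ih =>
    intro t ht c hc m
    obtain ⟨td, htd, hlow⟩ := decompose F ht
    have hevtd : evalFS R td ∈ F (((k + 1 : ℕ) : ℤ) - 1) := by
      have h1 : evalFS R (t - td) ∈ F (k : ℤ) := eval_Wgrp F hone hmul hmono hlow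
      have h2 : evalFS R t ∈ F (k : ℤ) := by
        rw [hc]
        exact hmono (by exact_mod_cast Nat.zero_le k) (coe_mem_F0 F S₀ hS₀ c)
      have h3 : evalFS R td = evalFS R t - evalFS R (t - td) := by rw [map_sub]; abel
      rw [h3]
      have := sub_mem h2 h1
      convert this using 2
      push_cast; ring
    have htR := hSymInj (k + 1) td htd hevtd
    obtain ⟨t', ht', d, he, hψ⟩ :=
      trivialRel_le_Gk F ρ haddr S₀ hS₀ hmono hmul hgr hrestr hlin hLeibniz haddl hint k htR
    have ht'' : t' + (t - td) ∈ Wgrp F k := add_mem ht' hlow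
    have he'' : evalFS R (t' + (t - td)) = ((c - d : S₀) : R) := by
      have h4 : evalFS R t' = evalFS R td - (d : R) := by rw [he]; abel
      rw [map_add, map_sub, h4, hc]
      push_cast; abel
    have hmain := ih (t' + (t - td)) ht'' (c - d) he'' m
    have hsplit : psiFS ρ t m = psiFS ρ td m + psiFS ρ (t - td) m := by
      have hts : t = td + (t - td) := by abel
      rw [← psi_add_apply, ← hts]
    have h5 : psiFS ρ t' m + psiFS ρ (t - td) m = (c - d) • m := by
      rw [← psi_add_apply]; exact hmain
    rw [hsplit, hψ m, add_right_comm, h5, ← add_smul, sub_add_cancel]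

include haddr in
theorem mul_lemma : ∀ {k k' : ℕ} {t t' : FormalSum R}, t ∈ Wgrp F k → t' ∈ Wgrp F k' →
    ∃ s ∈ Wgrp F (k + k'), evalFS R s = evalFS R t * evalFS R t' ∧
      ∀ m : M, psiFS ρ s m = psiFS ρ t (psiFS ρ t' m) := by
  intro k k' t t' ht ht'
  induction ht using AddSubgroup.closure_induction with
  | mem a ha =>
    obtain ⟨l, hl, hx, rfl⟩ := ha
    have INNER : ∃ s ∈ Wgrp F (k + k'), evalFS R s = l.prod * evalFS R t' ∧
        ∀ m : M, psiFS ρ s m = wmap ρ l (psiFS ρ t' m) := by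
      induction ht' using AddSubgroup.closure_induction with
      | mem u hu =>
        obtain ⟨l', hl', hx', rfl⟩ := hu
        refine ⟨Finsupp.single (l ++ l') 1,
          single_mem_Wgrp F (by simp only [List.length_append]; omega) ?_, ?_, ?_⟩
        · intro w hw
          rcases List.mem_append.mp hw with h | h
          exacts [hx w h, hx' w h]
        · rw [evalFS_single, evalFS_single, one_smul, one_smul, List.prod_append]
        · intro m
          rw [psiFS_single, psiFS_single, one_smul, one_smul, wmap_append]
      | zero =>
        refine ⟨0, zero_mem _, by simp, fun m => ?_⟩
        rw [psi_zero_apply]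
        exact ((wmapHom F ρ haddr l hx).map_zero).symm
      | add a b ha hb iha ihb =>
        obtain ⟨s₁, hs₁, he₁, hp₁⟩ := iha
        obtain ⟨s₂, hs₂, he₂, hp₂⟩ := ihb
        exact ⟨s₁ + s₂, add_mem hs₁ hs₂,
          by rw [map_add, map_add, he₁, he₂, mul_add], fun m => by
            rw [psi_add_apply, hp₁ m, hp₂ m, psi_add_apply, ← wmap_add F ρ haddr hx]⟩
      | neg a ha iha =>
        obtain ⟨s₁, hs₁, he₁, hp₁⟩ := iha
        refine ⟨-s₁, neg_mem hs₁,
          by rw [map_neg, map_neg, he₁, mul_neg], fun m => ?_⟩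
        rw [psi_neg_apply, hp₁ m, psi_neg_apply]
        exact ((wmapHom F ρ haddr l hx).map_neg _).symm
    obtain ⟨s, hs, he, hp⟩ := INNER
    exact ⟨s, hs, by rw [he, evalFS_single, one_smul],
      fun m => by rw [hp m, psiFS_single, one_smul]⟩
  | zero => exact ⟨0, zero_mem _, by simp, fun m => by simp⟩
  | add a b ha hb iha ihb =>
    obtain ⟨s₁, hs₁, he₁, hp₁⟩ := iha
    obtain ⟨s₂, hs₂, he₂, hp₂⟩ := ihb
    exact ⟨s₁ + s₂, add_mem hs₁ hs₂,
      by rw [map_add, map_add, he₁, he₂, add_mul], fun m => by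
        rw [psi_add_apply, hp₁ m, hp₂ m, psi_add_apply]⟩
  | neg a ha iha =>
    obtain ⟨s₁, hs₁, he₁, hp₁⟩ := iha
    exact ⟨-s₁, neg_mem hs₁,
      by rw [map_neg, map_neg, he₁, neg_mul], fun m => by
        rw [psi_neg_apply, hp₁ m, psi_neg_apply]⟩

include hneg in
theorem eval_surj
    (hSymSurj : ∀ k : ℕ, ∀ x ∈ F (k : ℤ), ∃ t ∈ degreePart' F k,
      x - evalFS R t ∈ F ((k : ℤ) - 1)) :
    ∀ (n : ℕ) (x : R), x ∈ F (n : ℤ) → ∃ t ∈ Wgrp F n, evalFS R t = x := by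
  intro n
  induction n with
  | zero =>
    intro x hx
    obtain ⟨t, htd, hres⟩ := hSymSurj 0 x (by exact_mod_cast hx)
    have h1 : x - evalFS R t ∈ F (-1) := by simpa using hres
    rw [hneg (-1) (by norm_num)] at h1
    have h2 := AddSubgroup.mem_bot.mp h1
    exact ⟨t, degreePart_le_Wgrp F 0 htd, (sub_eq_zero.mp h2).symm⟩
  | succ n ihn =>
    intro x hx
    obtain ⟨t₀, htd, hres⟩ := hSymSurj (n + 1) x (by exact_mod_cast hx)
    have h1 : x - evalFS R t₀ ∈ F (n : ℤ) := by convert hres using 2; push_cast; ring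
    obtain ⟨t₁, ht₁, he₁⟩ := ihn _ h1
    refine ⟨t₀ + t₁, add_mem (degreePart_le_Wgrp F _ htd)
      (Wgrp_mono F (Nat.le_succ n) ht₁), ?_⟩
    rw [map_add, he₁]
    abel

end Main

end LogConnAux

open LogConnAux

/-- Equivalence between integrable logarithmic connections and left module structures, in the
abstract PBW-converse setting.  Let `R` be a filtered ring as in the converse PBW theorem
(`Gr(R)` commutative and `Sym_{R₀}(R₁/R₀) ≅ Gr(R)`, with `R₀ = F 0` the commutative subring
`S₀` and `R₁ = F 1`).  Let `M` be an `R₀`-module and `ρ` an `R₀`-linear map assigning to each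
`δ ∈ R₁` an additive endomorphism of `M`, restricting on `R₀` to the given scalar action,
satisfying the Leibniz condition `ρ δ (a • m) = [δ,a] • m + a • ρ δ m` and the integrability
condition `ρ [δ,δ'] = ρ δ ∘ ρ δ' - ρ δ' ∘ ρ δ`.  Then there is a unique left `R`-module
structure on `M` (a ring homomorphism `R →+* End_ℤ(M)`) restricting to the given
`R₀`-structure and with `δ · m = ρ δ m` for `δ ∈ R₁`. -/



theorem logConnection_equiv_module_structure {R : Type*} [Ring R] (F : ℤ → AddSubgroup R)
    (hmono : Monotone F)
    (hneg : ∀ k : ℤ, k < 0 → F k = ⊥)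
    (hone : (1 : R) ∈ F 0)
    (hmul : ∀ (i j : ℤ) (x y : R), x ∈ F i → y ∈ F j → x * y ∈ F (i + j))
    (hexh : ∀ x : R, ∃ k : ℤ, x ∈ F k)
    (hgr : ∀ (i j : ℤ) (x y : R), x ∈ F i → y ∈ F j → x * y - y * x ∈ F (i + j - 1))
    (hSymSurj : ∀ k : ℕ, ∀ x ∈ F (k : ℤ), ∃ t ∈ degreePart F k,
      x - evalFS R t ∈ F ((k : ℤ) - 1))
    (hSymInj : ∀ k : ℕ, ∀ t ∈ degreePart F k,
      evalFS R t ∈ F ((k : ℤ) - 1) → t ∈ trivialRelations F k)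
    (S₀ : Subring R) (hS₀ : (S₀ : Set R) = (F 0 : Set R))
    (hS₀comm : ∀ a b : S₀, a * b = b * a)
    (M : Type*) [AddCommGroup M] [Module S₀ M]
    (ρ : R → M → M)
    (haddl : ∀ x ∈ F 1, ∀ y ∈ F 1, ∀ m : M, ρ (x + y) m = ρ x m + ρ y m)
    (haddr : ∀ x ∈ F 1, ∀ m m' : M, ρ x (m + m') = ρ x m + ρ x m')
    (hrestr : ∀ (a : S₀) (m : M), ρ (a : R) m = a • m)
    (hlin : ∀ (a : S₀), ∀ x ∈ F 1, ∀ m : M, ρ ((a : R) * x) m = a • ρ x m)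
    (hLeibniz : ∀ x ∈ F 1, ∀ (a c : S₀) (m : M),
      (c : R) = x * (a : R) - (a : R) * x → ρ x ((a : S₀) • m) = c • m + a • ρ x m)
    (hint : ∀ x ∈ F 1, ∀ y ∈ F 1, ∀ m : M,
      ρ (x * y - y * x) m = ρ x (ρ y m) - ρ y (ρ x m)) :
    ∃! Φ : R →+* Module.End ℤ M,
      (∀ (a : S₀) (m : M), Φ (a : R) m = a • m) ∧
      (∀ x ∈ F 1, ∀ m : M, Φ x m = ρ x m) := by
  classical
  have hSymSurj' : ∀ k : ℕ, ∀ x ∈ F (k : ℤ), ∃ t ∈ degreePart' F k,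
      x - evalFS R t ∈ F ((k : ℤ) - 1) := hSymSurj
  have hSymInj' : ∀ k : ℕ, ∀ t ∈ degreePart' F k,
      evalFS R t ∈ F ((k : ℤ) - 1) → t ∈ trivialRelations' F k := hSymInj
  have hrepr : ∀ x : R, ∃ t : FormalSum R, (∃ n : ℕ, t ∈ Wgrp F n) ∧ evalFS R t = x := by
    intro x
    obtain ⟨k, hk⟩ := hexh x
    have hk' : x ∈ F ((k.toNat : ℕ) : ℤ) := hmono (Int.self_le_toNat k) hk
    obtain ⟨t, ht, he⟩ := eval_surj F hneg hSymSurj' k.toNat x hk'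
    exact ⟨t, ⟨k.toNat, ht⟩, he⟩
  choose T hTW hTe using hrepr
  have keyL := key_lemma F ρ haddr S₀ hS₀ hmono hone hmul hgr haddl hrestr hlin hLeibniz
    hint hSymInj'
  have hinj : ∀ {k k' : ℕ} {t t' : FormalSum R}, t ∈ Wgrp F k → t' ∈ Wgrp F k' →
      evalFS R t = evalFS R t' → ∀ m : M, psiFS ρ t m = psiFS ρ t' m := by
    intro k k' t t' ht ht' he m
    have hsub : t - t' ∈ Wgrp F (max k k') :=
      sub_mem (Wgrp_mono F (le_max_left _ _) ht) (Wgrp_mono F (le_max_right _ _) ht')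
    have h0 : evalFS R (t - t') = ((0 : S₀) : R) := by rw [map_sub, he]; simp
    have h1 := keyL (max k k') _ hsub 0 h0 m
    rw [psi_sub_apply] at h1
    have h2 : psiFS ρ t m - psiFS ρ t' m = 0 := by simpa using h1
    exact sub_eq_zero.mp h2
  have f_eq : ∀ (x : R) {k : ℕ} {t : FormalSum R}, t ∈ Wgrp F k → evalFS R t = x →
      ∀ m : M, psiFS ρ (T x) m = psiFS ρ t m := by
    intro x k t ht he m
    obtain ⟨n, hTn⟩ := hTW x
    exact hinj hTn ht ((hTe x).trans he.symm) m
  have f_add : ∀ (x : R) (m m' : M),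
      psiFS ρ (T x) (m + m') = psiFS ρ (T x) m + psiFS ρ (T x) m' := by
    intro x m m'
    obtain ⟨n, hTn⟩ := hTW x
    exact psiW_add F ρ haddr hTn m m'
  let Φ0 : R → Module.End ℤ M := fun x =>
    (AddMonoidHom.mk' (fun m => psiFS ρ (T x) m) (f_add x)).toIntLinearMap
  refine ⟨{ toFun := Φ0, map_one' := ?_, map_mul' := ?_, map_zero' := ?_, map_add' := ?_ },
    ⟨?_, ?_⟩, ?_⟩
  · apply LinearMap.ext
    intro m
    have h1 : (Finsupp.single ([] : List R) 1 : FormalSum R) ∈ Wgrp F 0 :=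
      single_mem_Wgrp F (by simp) (by simp)
    have he : evalFS R (Finsupp.single ([] : List R) 1) = 1 := by
      rw [evalFS_single]; simp
    show psiFS ρ (T 1) m = m
    rw [f_eq 1 h1 he m, psiFS_single]
    simp
  · intro x y
    apply LinearMap.ext
    intro m
    obtain ⟨nx, hx⟩ := hTW x
    obtain ⟨ny, hy⟩ := hTW y
    obtain ⟨s, hs, hse, hsp⟩ := mul_lemma F ρ haddr hx hy
    have he : evalFS R s = x * y := by rw [hse, hTe, hTe]
    show psiFS ρ (T (x * y)) m = psiFS ρ (T x) (psiFS ρ (T y) m)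
    rw [f_eq (x * y) hs he m, hsp m]
  · apply LinearMap.ext
    intro m
    show psiFS ρ (T 0) m = 0
    rw [f_eq 0 (zero_mem (Wgrp F 0)) (map_zero _) m, psi_zero_apply]
  · intro x y
    apply LinearMap.ext
    intro m
    obtain ⟨nx, hx⟩ := hTW x
    obtain ⟨ny, hy⟩ := hTW y
    have hmem : T x + T y ∈ Wgrp F (max nx ny) :=
      add_mem (Wgrp_mono F (le_max_left _ _) hx) (Wgrp_mono F (le_max_right _ _) hy)
    have he : evalFS R (T x + T y) = x + y := by rw [map_add, hTe, hTe]
    show psiFS ρ (T (x + y)) m = psiFS ρ (T x) m + psiFS ρ (T y) m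
    rw [f_eq (x + y) hmem he m, psi_add_apply]
  · intro a m
    have hmem : (Finsupp.single [(a : R)] 1 : FormalSum R) ∈ Wgrp F 1 :=
      single_mem_Wgrp F (by simp) (by
        intro w hw
        simp only [List.mem_singleton] at hw
        subst hw
        exact hmono zero_le_one (coe_mem_F0 F S₀ hS₀ a))
    have he : evalFS R (Finsupp.single [(a : R)] 1) = (a : R) := by
      rw [evalFS_single]; simp
    show psiFS ρ (T (a : R)) m = a • m
    rw [f_eq _ hmem he m, psiFS_single, one_smul]
    simp only [wmap_cons, wmap_nil]
    exact hrestr a m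
  · intro x hx m
    have hmem : (Finsupp.single [x] 1 : FormalSum R) ∈ Wgrp F 1 :=
      single_mem_Wgrp F (by simp) (by
        intro w hw
        simp only [List.mem_singleton] at hw
        subst hw
        exact hx)
    have he : evalFS R (Finsupp.single [x] 1) = x := by
      rw [evalFS_single]; simp
    show psiFS ρ (T x) m = ρ x m
    rw [f_eq _ hmem he m, psiFS_single, one_smul]
    rfl
  · intro Ψ hΨ
    obtain ⟨hΨ1, hΨ2⟩ := hΨ
    refine RingHom.ext fun x => LinearMap.ext fun m => ?_
    have hword : ∀ l : List R, (∀ w ∈ l, w ∈ F 1) → ∀ m : M, Ψ l.prod m = wmap ρ l m := by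
      intro l hl
      induction l with
      | nil =>
        intro m
        rw [List.prod_nil, map_one]
        rfl
      | cons w l ihl =>
        intro m
        rw [List.prod_cons, map_mul, Module.End.mul_apply,
          ihl (fun z hz => hl z (List.mem_cons_of_mem _ hz)) m, wmap_cons]
        exact hΨ2 w (hl w (List.mem_cons_self)) _
    have hWg : ∀ {n : ℕ} {t : FormalSum R}, t ∈ Wgrp F n →
        ∀ m : M, Ψ (evalFS R t) m = psiFS ρ t m := by
      intro n t ht
      induction ht using AddSubgroup.closure_induction with
      | mem s hs =>
        obtain ⟨l, hl, hxl, rfl⟩ := hs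
        intro m
        rw [evalFS_single, one_smul, psiFS_single, one_smul]
        exact hword l hxl m
      | zero =>
        intro m
        rw [map_zero, map_zero, psi_zero_apply]
        rfl
      | add a b ha hb iha ihb =>
        intro m
        rw [map_add, map_add, LinearMap.add_apply, iha m, ihb m, psi_add_apply]
      | neg a ha iha =>
        intro m
        rw [map_neg, map_neg, LinearMap.neg_apply, iha m, psi_neg_apply]
    obtain ⟨n, hTn⟩ := hTW x
    have hfin := hWg hTn m
    rw [hTe x] at hfin
    exact hfin

end
end
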